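/- (Optimal control via quotient) Let Σ be a BCN with F ∈ L^{N×NM}, cost J = Σ_{t=0}^{T−1} l(u(t), x(t)) + g(x(T)), and let S be the equivalence relation (x,x')∈S iff g(x)=g(x') and l(u,x)=l(u,x') for all u. Suppose R ⊆ S is induced by a full row rank C ∈ L^{Ñ×N} and satisfies the invariance property, with quotient system Σ_R and induced costs l_R(u, Cx) = l(u,x), g_R(Cx) = g(x), J_R = Σ_{t=0}^{T−1} l_R(u(t), x_R(t)) + g_R(x_R(T)). Then: (i) any control sequence u*(0),…,u*(T−1) minimizing J_R from initial state Cx₀ also minimizes J from x₀, and the optimal costs coincide; (ii) if (x_R,t) ↦ u*(x_R,t) is an optimal feedback policy for Σ_R, then (x,t) ↦ u*(Cx,t) is an optimal feedback policy for Σ. -/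
import Mathlib


open Matrix

noncomputable section
open scoped Classical

/-- The `i`-th canonical basis vector of length `N`. -/
def canon {N : ℕ} (i : Fin N) : Fin N → ℝ := Pi.single i 1

/-- `Delta N` is the set of canonical basis vectors of length `N`. -/
def Delta (N : ℕ) : Set (Fin N → ℝ) := {v | ∃ i, v = canon i}

/-- A logical matrix: every column is a canonical basis vector. -/
def IsLogical {m : ℕ} {J : Type*} (A : Matrix (Fin m) J ℝ) : Prop :=
  ∀ j : J, ∃ i : Fin m, (fun r => A r j) = canon i

/-- Full row rank for a logical matrix: every canonical vector occurs among the columns. -/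
def FullRowRank {m : ℕ} {J : Type*} (A : Matrix (Fin m) J ℝ) : Prop :=
  ∀ i : Fin m, ∃ j : J, (fun r => A r j) = canon i

/-- Semitensor product `F ⋉ u ⋉ x` for a BCN matrix `F ∈ L^{N×NM}`:
`F` times the Kronecker product `u ⊗ x`. -/
def stp {N M : ℕ} (F : Matrix (Fin N) (Fin M × Fin N) ℝ)
    (u : Fin M → ℝ) (x : Fin N → ℝ) : Fin N → ℝ :=
  F.mulVec (fun p => u p.1 * x p.2)

/-- Boolean product of (0,1)-matrices: `(A ⊙ B) i k = ⋁ j, A i j ∧ B j k`. -/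
def boolProd {I J K : Type*} (A : Matrix I J ℝ) (B : Matrix J K ℝ) : Matrix I K ℝ :=
  fun i k => if ∃ j, A i j = 1 ∧ B j k = 1 then 1 else 0

/-- The `N×N` block `F_k = F ⋉ δ_M^k` of `F`. -/
def blockOf {N M : ℕ} (F : Matrix (Fin N) (Fin M × Fin N) ℝ) (k : Fin M) :
    Matrix (Fin N) (Fin N) ℝ :=
  fun r s => F r (k, s)

/-- The matrix `F̃ = [F̃_1 … F̃_M]` of the quotient system, `F̃_k = C ⊙ F_k ⊙ Cᵀ`. -/
def quotMat {N M Nt : ℕ} (F : Matrix (Fin N) (Fin M × Fin N) ℝ)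
    (C : Matrix (Fin Nt) (Fin N) ℝ) : Matrix (Fin Nt) (Fin M × Fin Nt) ℝ :=
  fun i p => boolProd (boolProd C (blockOf F p.1)) Cᵀ i p.2

/-- Open-loop trajectory of a Boolean system from `x0` under input sequence `u`. -/
def traj {N M : ℕ} (F : Matrix (Fin N) (Fin M × Fin N) ℝ)
    (u : ℕ → (Fin M → ℝ)) (x0 : Fin N → ℝ) : ℕ → (Fin N → ℝ)
  | 0 => x0
  | t + 1 => stp F (u t) (traj F u x0 t)

/-- Cost `J = Σ_{t<T} l(u(t), x(t)) + g(x(T))` of the input sequence `u` from `x0`. -/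
def cost {N M : ℕ} (F : Matrix (Fin N) (Fin M × Fin N) ℝ)
    (l : (Fin M → ℝ) → (Fin N → ℝ) → ℝ) (g : (Fin N → ℝ) → ℝ)
    (T : ℕ) (u : ℕ → (Fin M → ℝ)) (x0 : Fin N → ℝ) : ℝ :=
  (∑ t ∈ Finset.range T, l (u t) (traj F u x0 t)) + g (traj F u x0 T)

/-- Closed-loop trajectory under a time-varying state feedback `K`. -/
def fbtraj {N M : ℕ} (F : Matrix (Fin N) (Fin M × Fin N) ℝ)
    (K : (Fin N → ℝ) → ℕ → (Fin M → ℝ)) (x0 : Fin N → ℝ) : ℕ → (Fin N → ℝ)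
  | 0 => x0
  | t + 1 => stp F (K (fbtraj F K x0 t) t) (fbtraj F K x0 t)

/-- Closed-loop cost under a time-varying state feedback `K`. -/
def fbcost {N M : ℕ} (F : Matrix (Fin N) (Fin M × Fin N) ℝ)
    (l : (Fin M → ℝ) → (Fin N → ℝ) → ℝ) (g : (Fin N → ℝ) → ℝ)
    (T : ℕ) (K : (Fin N → ℝ) → ℕ → (Fin M → ℝ)) (x0 : Fin N → ℝ) : ℝ :=
  (∑ t ∈ Finset.range T, l (K (fbtraj F K x0 t) t) (fbtraj F K x0 t)) +
    g (fbtraj F K x0 T)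


-- Auxiliary lemmas -------------------------------------------------------

lemma canon_apply {N : ℕ} (i j : Fin N) : canon i j = if j = i then 1 else 0 := by
  simp [canon, Pi.single_apply]

lemma canon_inj {N : ℕ} {i j : Fin N} (h : canon i = canon j) : i = j := by
  have h1 := congrFun h i
  rw [canon_apply, canon_apply, if_pos rfl] at h1
  by_contra hne
  rw [if_neg hne] at h1
  exact one_ne_zero h1

lemma col_eq_one_iff {m : ℕ} {J : Type*} {A : Matrix (Fin m) J ℝ} {j : J} {i : Fin m}
    (h : (fun r => A r j) = canon i) (r : Fin m) : A r j = 1 ↔ r = i := by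
  have h1 := congrFun h r
  rw [h1, canon_apply]
  split_ifs with hri
  · simp [hri]
  · simp [hri]

lemma mulVec_canon {m n : ℕ} (A : Matrix (Fin m) (Fin n) ℝ) (j : Fin n) :
    A.mulVec (canon j) = fun i => A i j := by
  funext i
  simp [Matrix.mulVec, dotProduct, canon, Pi.single_apply, mul_ite]

lemma stp_canon {N M : ℕ} (F : Matrix (Fin N) (Fin M × Fin N) ℝ) (k : Fin M) (s : Fin N) :
    stp F (canon k) (canon s) = fun r => F r (k, s) := by
  funext r
  simp only [stp, Matrix.mulVec, dotProduct]
  rw [Fintype.sum_prod_type]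
  simp [canon_apply, mul_ite, ite_and]

/-- optimal control via quotient: (i) an optimal control sequence for
the quotient `Σ_R` from `Cx₀` is optimal for `Σ` from `x₀`, with equal optimal costs;
(ii) an optimal feedback policy for `Σ_R` lifts to an optimal feedback policy for `Σ`. -/
theorem stmt16 {N M Nt : ℕ} (F : Matrix (Fin N) (Fin M × Fin N) ℝ) (hF : IsLogical F)
    (C : Matrix (Fin Nt) (Fin N) ℝ) (hC : IsLogical C) (hfrr : FullRowRank C)
    (l : (Fin M → ℝ) → (Fin N → ℝ) → ℝ) (g : (Fin N → ℝ) → ℝ)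
    (T : ℕ) (hT : 0 < T) (x0 : Fin N → ℝ) (hx0 : x0 ∈ Delta N)
    -- R ⊆ S, where (x,x') ∈ S iff g(x) = g(x') and l(u,x) = l(u,x') for all u:
    (hRS : ∀ x ∈ Delta N, ∀ x' ∈ Delta N, C.mulVec x = C.mulVec x' →
      g x = g x' ∧ ∀ u ∈ Delta M, l u x = l u x')
    -- invariance property of R:
    (hinv : ∀ a ∈ Delta N, ∀ b ∈ Delta N, C.mulVec a = C.mulVec b →
      ∀ u ∈ Delta M, C.mulVec (stp F u a) = C.mulVec (stp F u b))
    -- induced costs on the quotient: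
    (lR : (Fin M → ℝ) → (Fin Nt → ℝ) → ℝ) (gR : (Fin Nt → ℝ) → ℝ)
    (hlR : ∀ u ∈ Delta M, ∀ x ∈ Delta N, lR u (C.mulVec x) = l u x)
    (hgR : ∀ x ∈ Delta N, gR (C.mulVec x) = g x) :
    -- (i)
    ((∀ ustar : ℕ → (Fin M → ℝ), (∀ t, ustar t ∈ Delta M) →
        (∀ v : ℕ → (Fin M → ℝ), (∀ t, v t ∈ Delta M) →
          cost (quotMat F C) lR gR T ustar (C.mulVec x0) ≤
            cost (quotMat F C) lR gR T v (C.mulVec x0)) →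
        ((∀ v : ℕ → (Fin M → ℝ), (∀ t, v t ∈ Delta M) →
            cost F l g T ustar x0 ≤ cost F l g T v x0) ∧
          cost F l g T ustar x0 = cost (quotMat F C) lR gR T ustar (C.mulVec x0))) ∧
    -- (ii)
     (∀ K : (Fin Nt → ℝ) → ℕ → (Fin M → ℝ), (∀ q t, K q t ∈ Delta M) →
        (∀ q0 ∈ Delta Nt, ∀ v : ℕ → (Fin M → ℝ), (∀ t, v t ∈ Delta M) →
          fbcost (quotMat F C) lR gR T K q0 ≤ cost (quotMat F C) lR gR T v q0) →
        (∀ y0 ∈ Delta N, ∀ v : ℕ → (Fin M → ℝ), (∀ t, v t ∈ Delta M) →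
          fbcost F l g T (fun x t => K (C.mulVec x) t) y0 ≤ cost F l g T v y0))) := by
  classical
  -- column indices of C and F
  choose cidx hcidx using hC
  choose fidx hfidx using hF
  have hmvC : ∀ s, C.mulVec (canon s) = canon (cidx s) := fun s => by
    rw [mulVec_canon]; exact hcidx s
  have hstpF : ∀ k s, stp F (canon k) (canon s) = canon (fidx (k, s)) := fun k s => by
    rw [stp_canon]; exact hfidx (k, s)
  -- invariance in index form
  have hinvIdx : ∀ (k : Fin M) (s s' : Fin N), cidx s = cidx s' →
      cidx (fidx (k, s)) = cidx (fidx (k, s')) := by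
    intro k s s' hss
    have h := hinv (canon s) ⟨s, rfl⟩ (canon s') ⟨s', rfl⟩
      (by rw [hmvC, hmvC, hss]) (canon k) ⟨k, rfl⟩
    rw [hstpF, hstpF, hmvC, hmvC] at h
    exact canon_inj h
  -- key commutation on canonical vectors
  have hcomm : ∀ (k : Fin M) (s : Fin N),
      stp (quotMat F C) (canon k) (canon (cidx s)) = canon (cidx (fidx (k, s))) := by
    intro k s
    rw [stp_canon]
    funext i
    have key : (∃ s', boolProd C (blockOf F k) i s' = 1 ∧ Cᵀ s' (cidx s) = 1) ↔
        i = cidx (fidx (k, s)) := by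
      constructor
      · rintro ⟨s', h1, h2⟩
        rw [Matrix.transpose_apply] at h2
        have hs' : cidx s = cidx s' := (col_eq_one_iff (hcidx s') (cidx s)).mp h2
        simp only [boolProd] at h1
        have hex : ∃ r, C i r = 1 ∧ blockOf F k r s' = 1 := by
          by_contra hc
          rw [if_neg hc] at h1
          exact zero_ne_one h1
        obtain ⟨r, hCir, hFr⟩ := hex
        have hr : r = fidx (k, s') :=
          (col_eq_one_iff (hfidx (k, s')) r).mp hFr
        have hi : i = cidx r := (col_eq_one_iff (hcidx r) i).mp hCir
        rw [hi, hr]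
        exact (hinvIdx k s' s hs'.symm)
      · rintro rfl
        refine ⟨s, ?_, ?_⟩
        · simp only [boolProd]
          exact if_pos ⟨fidx (k, s), (col_eq_one_iff (hcidx (fidx (k, s))) _).mpr rfl,
            (col_eq_one_iff (hfidx (k, s)) _).mpr rfl⟩
        · rw [Matrix.transpose_apply]
          exact (col_eq_one_iff (hcidx s) (cidx s)).mpr rfl
    show quotMat F C i (k, cidx s) = canon (cidx (fidx (k, s))) i
    rw [canon_apply]
    unfold quotMat boolProd
    split_ifs with h1 h2 h2
    · rfl
    · exact absurd (key.mp h1) h2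
    · exact absurd (key.mpr h2) h1
    · rfl
  -- Delta-membership and commutation, vector form
  have hDstp : ∀ u ∈ Delta M, ∀ x ∈ Delta N, stp F u x ∈ Delta N := by
    rintro u ⟨k, rfl⟩ x ⟨s, rfl⟩; exact ⟨_, hstpF k s⟩
  have hCx : ∀ x ∈ Delta N, C.mulVec x ∈ Delta Nt := by
    rintro x ⟨s, rfl⟩; exact ⟨_, hmvC s⟩
  have hcommv : ∀ u ∈ Delta M, ∀ x ∈ Delta N,
      stp (quotMat F C) u (C.mulVec x) = C.mulVec (stp F u x) := by
    rintro u ⟨k, rfl⟩ x ⟨s, rfl⟩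
    rw [hmvC, hcomm, hstpF, hmvC]
  -- trajectories commute
  have htraj : ∀ (u : ℕ → Fin M → ℝ), (∀ t, u t ∈ Delta M) → ∀ y ∈ Delta N,
      ∀ t, traj F u y t ∈ Delta N ∧
        traj (quotMat F C) u (C.mulVec y) t = C.mulVec (traj F u y t) := by
    intro u hu y hy t
    induction t with
    | zero => exact ⟨hy, rfl⟩
    | succ t ih =>
      refine ⟨hDstp _ (hu t) _ ih.1, ?_⟩
      show stp (quotMat F C) (u t) (traj (quotMat F C) u (C.mulVec y) t) = _
      rw [ih.2, hcommv _ (hu t) _ ih.1]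
      rfl
  -- open-loop costs agree
  have hcost : ∀ (u : ℕ → Fin M → ℝ), (∀ t, u t ∈ Delta M) → ∀ y ∈ Delta N,
      cost (quotMat F C) lR gR T u (C.mulVec y) = cost F l g T u y := by
    intro u hu y hy
    unfold cost
    congr 1
    · refine Finset.sum_congr rfl fun t _ => ?_
      rw [(htraj u hu y hy t).2, hlR _ (hu t) _ (htraj u hu y hy t).1]
    · rw [(htraj u hu y hy T).2, hgR _ (htraj u hu y hy T).1]
  -- closed-loop trajectories commute
  have hfb : ∀ (K : (Fin Nt → ℝ) → ℕ → Fin M → ℝ), (∀ q t, K q t ∈ Delta M) →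
      ∀ y ∈ Delta N, ∀ t,
        fbtraj F (fun x t => K (C.mulVec x) t) y t ∈ Delta N ∧
        fbtraj (quotMat F C) K (C.mulVec y) t =
          C.mulVec (fbtraj F (fun x t => K (C.mulVec x) t) y t) := by
    intro K hK y hy t
    induction t with
    | zero => exact ⟨hy, rfl⟩
    | succ t ih =>
      refine ⟨hDstp _ (hK _ t) _ ih.1, ?_⟩
      show stp (quotMat F C) (K (fbtraj (quotMat F C) K (C.mulVec y) t) t) _ = _
      rw [ih.2, hcommv _ (hK _ t) _ ih.1]
      rfl
  -- closed-loop costs agree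
  have hfbcost : ∀ (K : (Fin Nt → ℝ) → ℕ → Fin M → ℝ), (∀ q t, K q t ∈ Delta M) →
      ∀ y ∈ Delta N,
      fbcost (quotMat F C) lR gR T K (C.mulVec y) =
        fbcost F l g T (fun x t => K (C.mulVec x) t) y := by
    intro K hK y hy
    unfold fbcost
    congr 1
    · refine Finset.sum_congr rfl fun t _ => ?_
      rw [(hfb K hK y hy t).2, hlR _ (hK _ t) _ (hfb K hK y hy t).1]
    · rw [(hfb K hK y hy T).2, hgR _ (hfb K hK y hy T).1]
  constructor
  · -- (i)
    intro ustar hus hopt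
    refine ⟨fun v hv => ?_, (hcost ustar hus x0 hx0).symm⟩
    calc cost F l g T ustar x0
        = cost (quotMat F C) lR gR T ustar (C.mulVec x0) := (hcost ustar hus x0 hx0).symm
      _ ≤ cost (quotMat F C) lR gR T v (C.mulVec x0) := hopt v hv
      _ = cost F l g T v x0 := hcost v hv x0 hx0
  · -- (ii)
    intro K hK hopt y0 hy0 v hv
    calc fbcost F l g T (fun x t => K (C.mulVec x) t) y0
        = fbcost (quotMat F C) lR gR T K (C.mulVec y0) := (hfbcost K hK y0 hy0).symm
      _ ≤ cost (quotMat F C) lR gR T v (C.mulVec y0) := hopt _ (hCx y0 hy0) v hv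
      _ = cost F l g T v y0 := hcost v hv y0 hy0
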